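/- arXiv:0812.0440 — 6 statements merged into one kernel-verified Lean document; each statement's English description precedes it below -/
import Mathlib

section
/- For every n ≥ 1, the number c_n of indecomposable permutations of S_n satisfies c_n = n! − Σ_{p=1}^{n−1} c_p · (n−p)!. -/
/-!
Every permutation `σ` of `{0, …, n-1}` has a least `k ≥ 1` for which it stabilises
`{0, …, k-1}`. Cutting there writes `σ` uniquely as an indecomposable permutation of
`{0, …, k-1}` next to an arbitrary permutation of the remaining `n - k` points, so counting
permutations by this `k` gives `n! = ∑_{k=1}^{n} c_k (n-k)!`, whose top term is `c_n`.
-/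

/-- A permutation of `{0,...,n-1}` is indecomposable if it fixes no proper
initial segment `{0,...,p-1}` (for `1 ≤ p < n`) setwise. -/
def Indecomposable {n : ℕ} (α : Equiv.Perm (Fin n)) : Prop :=
  ∀ p : ℕ, 1 ≤ p → p < n → ∃ i : Fin n, (i : ℕ) < p ∧ p ≤ ((α i : ℕ))

/-- `numIndec n` is the number of indecomposable permutations of `S_n`. -/
noncomputable def numIndec (n : ℕ) : ℕ :=
  Nat.card {α : Equiv.Perm (Fin n) // Indecomposable α}

open Equiv Finset Nat

def Equiv.Perm.subtypeCongrEquiv {α : Type*} (p : α → Prop) [DecidablePred p] :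
    Perm {a // p a} × Perm {a // ¬p a} ≃ {σ : Perm α // ∀ a, p (σ a) ↔ p a} where
  toFun e := ⟨e.1.subtypeCongr e.2, fun a => by
    by_cases h : p a
    · simp [Perm.subtypeCongr.left_apply _ _ h, h, (e.1 ⟨a, h⟩).2]
    · simp [Perm.subtypeCongr.right_apply _ _ h, h, (e.2 ⟨a, h⟩).2]⟩
  invFun σ := (σ.1.subtypePerm σ.2, σ.1.subtypePerm fun a => not_congr (σ.2 a))
  left_inv e := by
    ext x <;> simp [Perm.subtypeCongr.left_apply_subtype, Perm.subtypeCongr.right_apply_subtype]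
  right_inv σ := by ext a; by_cases h : p a <;> simp [h]

variable {n k j : ℕ}

def StabilizesPrefix (k : ℕ) (σ : Perm (Fin n)) : Prop :=
  ∀ x : Fin n, (σ x : ℕ) < k ↔ (x : ℕ) < k

theorem stabilizesPrefix_iff_forall_lt {σ : Perm (Fin n)} :
    StabilizesPrefix k σ ↔ ∀ x : Fin n, (x : ℕ) < k → (σ x : ℕ) < k := by
  refine ⟨fun h x => (h x).2, fun h x => ⟨fun hx => ?_, h x⟩⟩
  have hbij : Set.BijOn σ {y | (y : ℕ) < k} {y | (y : ℕ) < k} :=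
    ((Set.toFinite _).injOn_iff_bijOn_of_mapsTo h).1 σ.injective.injOn
  obtain ⟨y, hy, hyx⟩ := hbij.surjOn hx
  rwa [← σ.injective hyx]

theorem indecomposable_iff_forall_not_stabilizesPrefix {σ : Perm (Fin n)} :
    Indecomposable σ ↔ ∀ k, 0 < k → k < n → ¬StabilizesPrefix k σ := by
  simp only [Indecomposable, stabilizesPrefix_iff_forall_lt, not_forall, not_lt, exists_prop]
  rfl

theorem stabilizesPrefix_of_le {σ : Perm (Fin n)} (hk : n ≤ k) : StabilizesPrefix k σ :=
  fun x => iff_of_true ((σ x).isLt.trans_le hk) (x.isLt.trans_le hk)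

instance (k : ℕ) : DecidablePred (StabilizesPrefix (n := n) k) := fun _ => by
  unfold StabilizesPrefix; infer_instance

def firstBlockSize (σ : Perm (Fin n)) : ℕ :=
  Nat.find (⟨n + 1, n.succ_pos, stabilizesPrefix_of_le n.le_succ⟩ :
    ∃ k, 0 < k ∧ StabilizesPrefix k σ)

theorem firstBlockSize_eq_iff {σ : Perm (Fin n)} : firstBlockSize σ = k ↔
    0 < k ∧ StabilizesPrefix k σ ∧ ∀ j, 0 < j → j < k → ¬StabilizesPrefix j σ := by
  rw [firstBlockSize, Nat.find_eq_iff, and_assoc]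
  simp only [not_and]
  exact and_congr_right fun _ => and_congr_right fun _ =>
    forall_congr' fun j => ⟨fun h h0 hj => h hj h0, fun h hj h0 => h h0 hj⟩

theorem firstBlockSize_mem_Icc (hn : 0 < n) (σ : Perm (Fin n)) :
    firstBlockSize σ ∈ Icc 1 n := by
  obtain ⟨h0, -, hmin⟩ := firstBlockSize_eq_iff.1 (rfl : firstBlockSize σ = _)
  exact mem_Icc.2 ⟨h0, not_lt.1 fun h => hmin n hn h (stabilizesPrefix_of_le le_rfl)⟩

noncomputable def prefixSplit (hk : k ≤ n) :
    Perm (Fin k) × Perm {x : Fin n // ¬(x : ℕ) < k} ≃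
      {σ : Perm (Fin n) // StabilizesPrefix k σ} :=
  (prodCongr (Fin.castLEquiv hk).permCongr (Equiv.refl _)).trans
    (Perm.subtypeCongrEquiv fun x : Fin n => (x : ℕ) < k)

theorem prefixSplit_apply_castLE (hk : k ≤ n)
    (e : Perm (Fin k) × Perm {x : Fin n // ¬(x : ℕ) < k}) (i : Fin k) :
    ((prefixSplit hk e : Perm (Fin n)) (Fin.castLE hk i) : ℕ) = e.1 i := by
  -- `Equiv.trans_apply` does not fire: the two halves of `prefixSplit` meet only up to
  -- unfolding `StabilizesPrefix`.
  change (((Fin.castLEquiv hk).permCongr e.1).subtypeCongr e.2 (Fin.castLE hk i) : ℕ) = e.1 i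
  simp [permCongr_apply]

theorem Fin.card_subtype_not_lt (hk : k ≤ n) :
    Nat.card {x : Fin n // ¬(x : ℕ) < k} = n - k := by
  rw [Nat.card_eq_fintype_card, Fintype.card_subtype_compl,
    ← Fintype.card_congr (Fin.castLEquiv hk)]
  simp

theorem stabilizesPrefix_prefixSplit_iff (hk : k ≤ n) (hj : j ≤ k)
    (e : Perm (Fin k) × Perm {x : Fin n // ¬(x : ℕ) < k}) :
    StabilizesPrefix j (prefixSplit hk e : Perm (Fin n)) ↔ StabilizesPrefix j e.1 := by
  simp only [stabilizesPrefix_iff_forall_lt]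
  refine ⟨fun h x hx => ?_, fun h x hx => ?_⟩
  · simpa [prefixSplit_apply_castLE] using h (Fin.castLE hk x) hx
  · have hxk : (x : ℕ) < k := hx.trans_le hj
    simpa [← prefixSplit_apply_castLE hk e] using h ⟨x, hxk⟩ hx

theorem firstBlockSize_prefixSplit_eq_iff (hk0 : 0 < k) (hk : k ≤ n)
    (e : Perm (Fin k) × Perm {x : Fin n // ¬(x : ℕ) < k}) :
    firstBlockSize (prefixSplit hk e : Perm (Fin n)) = k ↔ Indecomposable e.1 := by
  rw [firstBlockSize_eq_iff, indecomposable_iff_forall_not_stabilizesPrefix]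
  simp only [hk0, (prefixSplit hk e).2, true_and]
  exact forall_congr' fun j => forall_congr' fun _ => forall_congr' fun hj =>
    not_congr (stabilizesPrefix_prefixSplit_iff hk hj.le e)

theorem card_firstBlockSize_eq (hk0 : 0 < k) (hk : k ≤ n) :
    Nat.card {σ : Perm (Fin n) // firstBlockSize σ = k} = numIndec k * (n - k)! := by
  have e : {β : Perm (Fin k) // Indecomposable β} × Perm {x : Fin n // ¬(x : ℕ) < k} ≃
      {σ : Perm (Fin n) // firstBlockSize σ = k} :=
    prodSubtypeFstEquivSubtypeProd.symm.trans <|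
      ((prefixSplit hk).subtypeEquiv fun e =>
        (firstBlockSize_prefixSplit_eq_iff hk0 hk e).symm).trans
      (subtypeSubtypeEquivSubtype fun h => (firstBlockSize_eq_iff.1 h).2.1)
  rw [← Nat.card_congr e, Nat.card_prod, Nat.card_perm, Fin.card_subtype_not_lt hk, numIndec]

theorem factorial_eq_sum_numIndec_mul (hn : 0 < n) :
    n ! = ∑ k ∈ Icc 1 n, numIndec k * (n - k)! := by
  classical
  calc n ! = #(univ : Finset (Perm (Fin n))) := by
        rw [Finset.card_univ, Fintype.card_perm, Fintype.card_fin]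
    _ = ∑ k ∈ Icc 1 n, #{σ | firstBlockSize σ = k} :=
      card_eq_sum_card_fiberwise fun σ _ => firstBlockSize_mem_Icc hn σ
    _ = ∑ k ∈ Icc 1 n, numIndec k * (n - k)! := sum_congr rfl fun k hk => by
      rw [← card_firstBlockSize_eq (mem_Icc.1 hk).1 (mem_Icc.1 hk).2, Nat.card_eq_fintype_card,
        Fintype.card_subtype]

theorem indec_count_recurrence (n : ℕ) (hn : 1 ≤ n) :
    (numIndec n : ℤ) =
      (Nat.factorial n : ℤ) -
        ∑ p ∈ Finset.Icc 1 (n - 1), (numIndec p : ℤ) * (Nat.factorial (n - p) : ℤ) := by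
  obtain ⟨m, rfl⟩ := Nat.exists_eq_add_of_le' hn
  rw [factorial_eq_sum_numIndec_mul hn, Nat.add_sub_cancel, Finset.sum_Icc_succ_top (by omega)]
  simp
end

section
/- For every n ≥ 1, the number of indecomposable permutations satisfies c_{n+1} = Σ_{p=1}^{n} p · c_p · (n−p)!. -/
open Equiv Finset

section InitialSegment

variable {n : ℕ}

def PreservesInitialSegment (p : ℕ) (α : Perm (Fin n)) : Prop :=
  ∀ i : Fin n, (i : ℕ) < p → (α i : ℕ) < p

lemma preservesInitialSegment_of_le {p : ℕ} (α : Perm (Fin n)) (h : n ≤ p) :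
    PreservesInitialSegment p α :=
  fun i _ => (α i).isLt.trans_le h

lemma indecomposable_iff_forall_not_preservesInitialSegment {α : Perm (Fin n)} :
    Indecomposable α ↔ ∀ q < n, 0 < q → ¬PreservesInitialSegment q α := by
  refine forall_congr' fun q => ?_
  simp only [PreservesInitialSegment, not_forall, not_lt, exists_prop]
  exact ⟨fun h hqn hq => h hq hqn, fun h hq hqn => h hqn hq⟩

instance {p : ℕ} {α : Perm (Fin n)} : Decidable (PreservesInitialSegment p α) := by
  unfold PreservesInitialSegment
  infer_instance

lemma exists_pos_preservesInitialSegment (α : Perm (Fin n)) :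
    ∃ p, 0 < p ∧ PreservesInitialSegment p α :=
  ⟨n + 1, n.succ_pos, preservesInitialSegment_of_le α n.le_succ⟩

def firstBlock (α : Perm (Fin n)) : ℕ :=
  Nat.find (exists_pos_preservesInitialSegment α)

lemma firstBlock_mem_Icc (hn : 0 < n) (α : Perm (Fin n)) : firstBlock α ∈ Icc 1 n :=
  mem_Icc.2 ⟨(Nat.find_spec (exists_pos_preservesInitialSegment α)).1,
    Nat.find_min' _ ⟨hn, preservesInitialSegment_of_le α le_rfl⟩⟩

lemma firstBlock_eq_iff {p : ℕ} (hp : 0 < p) (α : Perm (Fin n)) :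
    firstBlock α = p ↔
      PreservesInitialSegment p α ∧ ∀ q < p, 0 < q → ¬PreservesInitialSegment q α := by
  simp [firstBlock, Nat.find_eq_iff, hp]

end InitialSegment

section BlockSum

variable {p m : ℕ}

def blockSum (x : Perm (Fin p) × Perm (Fin m)) : Perm (Fin (p + m)) :=
  finSumFinEquiv.permCongr (Perm.sumCongrHom _ _ x)

lemma blockSum_injective : Function.Injective (blockSum (p := p) (m := m)) :=
  (finSumFinEquiv.permCongr).injective.comp Perm.sumCongrHom_injective

lemma blockSum_apply_of_lt (x : Perm (Fin p) × Perm (Fin m)) (i : Fin (p + m))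
    (h : (i : ℕ) < p) :
    (blockSum x i : ℕ) = x.1 ⟨i, h⟩ := by
  change (blockSum x (Fin.castAdd m ⟨i, h⟩) : ℕ) = _
  rw [blockSum, Equiv.permCongr_apply, finSumFinEquiv_symm_apply_castAdd]
  simp

lemma preservesInitialSegment_blockSum_iff {q : ℕ} (hq : q ≤ p)
    (x : Perm (Fin p) × Perm (Fin m)) :
    PreservesInitialSegment q (blockSum x) ↔ PreservesInitialSegment q x.1 := by
  constructor
  · intro h i hi
    simpa [blockSum_apply_of_lt x (Fin.castAdd m i) i.isLt] using h (Fin.castAdd m i) hi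
  · intro h i hi
    rw [blockSum_apply_of_lt x i (hi.trans_le hq)]
    exact h _ hi

lemma exists_blockSum_eq {α : Perm (Fin (p + m))} (h : PreservesInitialSegment p α) :
    ∃ x, blockSum x = α := by
  set σ : Perm (Fin p ⊕ Fin m) := finSumFinEquiv.symm.permCongr α
  have hσ : Set.MapsTo σ (Set.range Sum.inl) (Set.range Sum.inl) := by
    rintro _ ⟨i, rfl⟩
    have hlt : (α (Fin.castAdd m i) : ℕ) < p := h _ i.isLt
    refine ⟨⟨_, hlt⟩, ?_⟩
    simp only [σ, Equiv.permCongr_apply, Equiv.symm_symm, finSumFinEquiv_apply_left]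
    rw [Equiv.eq_symm_apply, finSumFinEquiv_apply_left]
    rfl
  obtain ⟨x, hx⟩ := Perm.mem_sumCongrHom_range_of_perm_mapsTo_inl hσ
  refine ⟨x, ?_⟩
  rw [blockSum, hx]
  ext
  simp [σ, Equiv.permCongr_apply]

lemma firstBlock_blockSum_eq_iff (hp : 0 < p) (x : Perm (Fin p) × Perm (Fin m)) :
    firstBlock (blockSum x) = p ↔ Indecomposable x.1 := by
  have hfull : PreservesInitialSegment p (blockSum x) :=
    (preservesInitialSegment_blockSum_iff le_rfl x).2 (preservesInitialSegment_of_le _ le_rfl)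
  rw [firstBlock_eq_iff hp, indecomposable_iff_forall_not_preservesInitialSegment]
  refine (and_iff_right hfull).trans (forall_congr' fun q => forall_congr' fun hqp => ?_)
  rw [preservesInitialSegment_blockSum_iff hqp.le]

lemma card_firstBlock_eq_of_add (hp : 0 < p) :
    Nat.card {α : Perm (Fin (p + m)) // firstBlock α = p} = numIndec p * m.factorial := by
  let f : {β : Perm (Fin p) // Indecomposable β} × Perm (Fin m) →
      {α : Perm (Fin (p + m)) // firstBlock α = p} :=
    fun x => ⟨blockSum (x.1, x.2), (firstBlock_blockSum_eq_iff hp _).2 x.1.2⟩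
  have hf : Function.Bijective f := by
    refine ⟨fun x y hxy => ?_, fun ⟨α, hα⟩ => ?_⟩
    · obtain ⟨h₁, h₂⟩ := Prod.ext_iff.1 (blockSum_injective (congrArg Subtype.val hxy))
      exact Prod.ext (Subtype.ext h₁) h₂
    · obtain ⟨x, rfl⟩ := exists_blockSum_eq ((firstBlock_eq_iff hp α).1 hα).1
      exact ⟨(⟨x.1, (firstBlock_blockSum_eq_iff hp x).1 hα⟩, x.2), rfl⟩
  rw [← Nat.card_congr (Equiv.ofBijective f hf), Nat.card_prod, Nat.card_perm, Nat.card_fin,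
    numIndec]

end BlockSum

lemma card_firstBlock_eq {n p : ℕ} (hp : p ∈ Icc 1 n) :
    Nat.card {α : Perm (Fin n) // firstBlock α = p} = numIndec p * (n - p).factorial := by
  obtain ⟨hp_pos, hpn⟩ := mem_Icc.1 hp
  obtain ⟨m, rfl⟩ := Nat.exists_eq_add_of_le hpn
  rw [Nat.add_sub_cancel_left]
  exact card_firstBlock_eq_of_add hp_pos

lemma sum_numIndec_mul_factorial {n : ℕ} (hn : 0 < n) :
    ∑ p ∈ Icc 1 n, numIndec p * (n - p).factorial = n.factorial := by
  classical
  calc ∑ p ∈ Icc 1 n, numIndec p * (n - p).factorial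
      = ∑ p ∈ Icc 1 n, #{α : Perm (Fin n) | firstBlock α = p} := by
        refine sum_congr rfl fun p hp => ?_
        rw [← card_firstBlock_eq hp, Nat.card_eq_fintype_card, Fintype.card_subtype]
    _ = Fintype.card (Perm (Fin n)) :=
        (card_eq_sum_card_fiberwise fun α _ => firstBlock_mem_Icc hn α).symm
    _ = n.factorial := by rw [Fintype.card_perm, Fintype.card_fin]

theorem indec_count_recurrence' (n : ℕ) (hn : 1 ≤ n) :
    numIndec (n + 1) =
      ∑ p ∈ Finset.Icc 1 n, p * numIndec p * Nat.factorial (n - p) := by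
  have hsum := sum_numIndec_mul_factorial hn
  have hsum_succ := sum_numIndec_mul_factorial (n := n + 1) (by omega)
  rw [sum_Icc_succ_top (by omega), Nat.sub_self, Nat.factorial_zero, mul_one] at hsum_succ
  have hterm : ∀ p ∈ Icc 1 n, (n + 1) * (numIndec p * (n - p).factorial)
      = numIndec p * (n + 1 - p).factorial + p * numIndec p * (n - p).factorial := by
    intro p hp
    obtain ⟨k, hk⟩ := Nat.exists_eq_add_of_le (mem_Icc.1 hp).2
    rw [hk, Nat.add_sub_cancel_left, show p + k + 1 - p = k + 1 by omega, Nat.factorial_succ]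
    ring
  have hscaled :
      (n + 1) * ∑ p ∈ Icc 1 n, numIndec p * (n - p).factorial = (n + 1).factorial := by
    rw [hsum, Nat.factorial_succ]
  rw [mul_sum, sum_congr rfl hterm, sum_add_distrib] at hscaled
  omega
end

section
/- For every n ≥ 1, the number of pairs (σ,α) of permutations of {1,...,n} generating a transitive subgroup of S_n equals (n−1)! times the number of orbits of the action of the stabilizer subgroup {φ ∈ S_n : φ(n) = n} on the set of such transitive pairs, where φ acts by simultaneous conjugation (σ,α) ↦ (φ⁻¹σφ, φ⁻¹αφ). -/
/-- A pair of permutations of `{0,...,n-1}` is transitive (a labeled hypermap)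
if the subgroup it generates acts transitively. -/
def IsTransitivePair {n : ℕ} (σ α : Equiv.Perm (Fin n)) : Prop :=
  ∀ x y : Fin n, ∃ g ∈ Subgroup.closure ({σ, α} : Set (Equiv.Perm (Fin n))), g x = y

/-- Two pairs of permutations are related by a rooted isomorphism if some
permutation fixing the last element `n-1` conjugates the first pair to the second. -/
def RootedIso {n : ℕ} (P Q : Equiv.Perm (Fin n) × Equiv.Perm (Fin n)) : Prop :=
  ∃ φ : Equiv.Perm (Fin n), (∀ x : Fin n, (x : ℕ) + 1 = n → φ x = x) ∧
    φ⁻¹ * P.1 * φ = Q.1 ∧ φ⁻¹ * P.2 * φ = Q.2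

/-!
The stabilizer of a point acts freely on transitive pairs by conjugation: a permutation
commuting with `σ` and `α` commutes with the whole transitive group they generate, so if it
fixes one point it fixes every point. Hence every orbit has `(n - 1)!` elements, and the
orbits are exactly the rooted isomorphism classes.
-/

open Equiv MulAction
open scoped Nat

theorem Equiv.Perm.eq_one_of_commute_of_apply_eq {α : Type*} {S : Set (Perm α)}
    (htrans : ∀ x y, ∃ c ∈ Subgroup.closure S, c x = y) {g : Perm α}
    (hcomm : ∀ s ∈ S, Commute g s) {a : α} (ha : g a = a) : g = 1 := by
  have hcent : Subgroup.closure S ≤ Subgroup.centralizer {g} :=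
    (Subgroup.closure_le _).2 fun s hs ↦
      Subgroup.mem_centralizer_singleton_iff.2 (hcomm s hs).symm.eq
  ext x
  obtain ⟨c, hc, rfl⟩ := htrans a x
  have hgc : g * c = c * g := (Subgroup.mem_centralizer_singleton_iff.1 (hcent hc)).symm
  rw [Perm.one_apply, ← Perm.mul_apply, hgc, Perm.mul_apply, ha]

theorem Equiv.Perm.card_stabilizer {α : Type*} [Finite α] (a : α) :
    Nat.card (stabilizer (Perm α) a) = (Nat.card α - 1)! := by
  have hpos : 0 < Nat.card α := Nat.card_pos_iff.2 ⟨⟨a⟩, inferInstance⟩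
  have h := (stabilizer (Perm α) a).index_mul_card
  rw [index_stabilizer_of_transitive, Nat.card_perm, ← Nat.mul_factorial_pred hpos.ne'] at h
  exact Nat.eq_of_mul_eq_mul_left hpos h

section

variable {n : ℕ}

theorem IsTransitivePair.conj {σ α : Perm (Fin n)} (h : IsTransitivePair σ α)
    (g : Perm (Fin n)) : IsTransitivePair (g * σ * g⁻¹) (g * α * g⁻¹) := by
  intro x y
  obtain ⟨c, hc, hcx⟩ := h (g⁻¹ x) (g⁻¹ y)
  have hgen : ({g * σ * g⁻¹, g * α * g⁻¹} : Set (Perm (Fin n))) =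
      (MulAut.conj g).toMonoidHom '' {σ, α} := by
    simp [Set.image_pair]
  refine ⟨g * c * g⁻¹, ?_, ?_⟩
  · rw [hgen, ← MonoidHom.map_closure]
    exact ⟨c, hc, rfl⟩
  · rw [Perm.mul_apply, Perm.mul_apply, hcx]; simp

abbrev TransitivePair (n : ℕ) :=
  {P : Perm (Fin n) × Perm (Fin n) // IsTransitivePair P.1 P.2}

namespace TransitivePair

instance : SMul (Perm (Fin n)) (TransitivePair n) where
  smul g P := ⟨(g * P.1.1 * g⁻¹, g * P.1.2 * g⁻¹), P.2.conj g⟩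

@[simp]
theorem smul_val (g : Perm (Fin n)) (P : TransitivePair n) :
    (g • P).1 = (g * P.1.1 * g⁻¹, g * P.1.2 * g⁻¹) :=
  rfl

instance : MulAction (Perm (Fin n)) (TransitivePair n) where
  one_smul P := by ext <;> simp
  mul_smul g h P := by ext <;> simp [mul_assoc]

theorem stabilizer_eq_bot (a : Fin n) (P : TransitivePair n) :
    stabilizer (stabilizer (Perm (Fin n)) a) P = ⊥ := by
  refine (Subgroup.eq_bot_iff_forall _).2 fun g hg ↦ Subtype.ext ?_
  have hfix : (g : Perm (Fin n)) • P = P := hg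
  simp only [Subtype.ext_iff, Prod.ext_iff, smul_val, mul_inv_eq_iff_eq_mul] at hfix
  refine Perm.eq_one_of_commute_of_apply_eq P.2 ?_ g.2
  rintro s (rfl | rfl)
  exacts [hfix.1, hfix.2]

theorem card_eq_factorial_mul_card_orbits (a : Fin n) :
    Nat.card (TransitivePair n) = (n - 1)! *
      Nat.card (orbitRel.Quotient (stabilizer (Perm (Fin n)) a) (TransitivePair n)) := by
  rw [Nat.card_congr (selfEquivOrbitsQuotientProd (stabilizer_eq_bot a)),
    Nat.card_prod, Perm.card_stabilizer, Nat.card_fin, mul_comm]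

theorem rootedIso_iff_orbitRel {m : ℕ} (P Q : TransitivePair (m + 1)) :
    RootedIso P.1 Q.1 ↔ orbitRel (stabilizer (Perm (Fin (m + 1))) (Fin.last m)) _ P Q := by
  have hroot (x : Fin (m + 1)) : (x : ℕ) + 1 = m + 1 ↔ x = Fin.last m := by
    simp [Fin.ext_iff]
  simp only [orbitRel_apply, mem_orbit_iff, RootedIso, Subtype.exists, Subgroup.smul_def,
    mem_stabilizer_iff, Perm.smul_def, hroot, forall_eq, Subtype.ext_iff, Prod.ext_iff,
    smul_val, exists_prop, mul_inv_eq_iff_eq_mul]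
  refine exists_congr fun g ↦ and_congr_right fun _ ↦ ?_
  simp only [mul_assoc, inv_mul_eq_iff_eq_mul]
  exact and_congr eq_comm eq_comm

end TransitivePair

end

theorem labeled_hypermaps_eq_factorial_mul_rooted (n : ℕ) (hn : 1 ≤ n) :
    Nat.card {P : Equiv.Perm (Fin n) × Equiv.Perm (Fin n) // IsTransitivePair P.1 P.2} =
      Nat.factorial (n - 1) *
        Nat.card (Quot (fun (P Q : {P : Equiv.Perm (Fin n) × Equiv.Perm (Fin n) //
          IsTransitivePair P.1 P.2}) => RootedIso P.1 Q.1)) := by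
  obtain ⟨m, rfl⟩ : ∃ m, n = m + 1 := ⟨n - 1, by omega⟩
  rw [TransitivePair.card_eq_factorial_mul_card_orbits (Fin.last m),
    Nat.card_congr (Quot.congrRight TransitivePair.rootedIso_iff_orbitRel)]
  rfl
end

section
/- For every n ≥ 1 and all p, q ≥ 1, the number of permutations of S_n with p left-to-right maxima and q cycles is equal to the number of permutations of S_n with p left-to-right maxima and q right-to-left minima. -/
/-- The number of cycles (orbits) of a permutation: nontrivial cycles together
with fixed points, the latter counting as cycles of length 1. -/
noncomputable def cycleCount {n : ℕ} (α : Equiv.Perm (Fin n)) : ℕ :=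
  α.cycleType.card + Nat.card {x : Fin n // α x = x}

/-- The number of left-to-right maxima of a permutation. -/
noncomputable def lrMaxCount {n : ℕ} (α : Equiv.Perm (Fin n)) : ℕ :=
  Nat.card {i : Fin n // ∀ j : Fin n, j < i → α j < α i}

/-- The number of right-to-left minima of a permutation. -/
noncomputable def rlMinCount {n : ℕ} (α : Equiv.Perm (Fin n)) : ℕ :=
  Nat.card {i : Fin n // ∀ j : Fin n, i < j → α i < α j}

/-!
The bijection `Equiv.Perm.cyclesToRLMins` is recursive. For `α ∈ S_{n+1}` let `i = α⁻¹(n+1)`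
be the position of the largest value and let `α' ∈ S_n` be `α` with `n+1` removed from its cycle;
the image of `α` is the image of `α'` with the largest value inserted at position `i`.

In `α`, and likewise in its image, the left-to-right maxima are `i` together with the
left-to-right maxima of `α'` (resp. of its image) lying before `i`, so they agree by induction.
Removing `n+1` from its cycle loses a cycle exactly when `n+1` is a fixed point, that is when
`i = n+1`, and inserting the largest value at position `i` creates a new right-to-left minimum
exactly when `i = n+1`.
-/

open Equiv Finset

namespace Equiv.Perm

variable {α : Type*} [Fintype α] [DecidableEq α]

noncomputable def numCycles (σ : Perm α) : ℕ :=
  σ.cycleType.card + Nat.card {x : α // σ x = x}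

theorem numCycles_add_card_support (σ : Perm α) :
    σ.numCycles + #σ.support = σ.cycleType.card + Fintype.card α := by
  have hfix : Nat.card {x : α // σ x = x} = Fintype.card α - #σ.support := by
    rw [← sum_cycleType, ← card_fixedPoints, ← Nat.card_eq_fintype_card]
    rfl
  have := σ.support.card_le_univ
  rw [numCycles, hfix]
  omega

theorem Disjoint.numCycles_mul {σ τ : Perm α} (h : Disjoint σ τ) :
    (σ * τ).numCycles + Fintype.card α = σ.numCycles + τ.numCycles := by
  have hσ := σ.numCycles_add_card_support
  have hτ := τ.numCycles_add_card_support
  have hστ := (σ * τ).numCycles_add_card_support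
  rw [h.cycleType_mul, Multiset.card_add, h.card_support_mul] at hστ
  omega

theorem IsCycle.numCycles_swap_mul {c : Perm α} (hc : c.IsCycle) {x : α} (hx : c x ≠ x) :
    (swap x (c x) * c).numCycles = c.numCycles + 1 := by
  have hc' := c.numCycles_add_card_support
  have hs := (swap x (c x) * c).numCycles_add_card_support
  rw [hc.cycleType, Multiset.card_singleton] at hc'
  by_cases hcc : c (c x) = x
  · have hswap := hc.eq_swap_of_apply_apply_eq_self hx hcc
    have hone : swap x (c x) * c = 1 := by
      calc swap x (c x) * c = swap x (c x) * swap x (c x) := congrArg _ hswap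
        _ = 1 := swap_mul_self _ _
    have htwo : #c.support = 2 := by
      rw [hswap]
      exact card_support_swap hx.symm
    rw [hone, cycleType_one, support_one] at hs
    rw [hone]
    simp only [Multiset.card_zero, card_empty] at hs
    omega
  · have hmem : x ∈ c.support := mem_support.2 hx
    rw [(hc.swap_mul hx hcc).cycleType, Multiset.card_singleton, support_swap_mul_eq c x hcc,
      card_sdiff_of_subset (singleton_subset_iff.2 hmem), card_singleton] at hs
    have := card_pos.2 ⟨x, hmem⟩
    omega

-- `swap x (τ x)` only splits `x` off the cycle of `x`, leaving the other cycles alone.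
theorem numCycles_swap_mul {τ : Perm α} {x : α} (hx : τ x ≠ x) :
    (swap x (τ x) * τ).numCycles = τ.numCycles + 1 := by
  set c := τ.cycleOf x
  have hc : c.IsCycle := isCycle_cycleOf τ hx
  have hcx : c x = τ x := cycleOf_apply_self τ x
  have hdc : Disjoint (τ * c⁻¹) c := disjoint_mul_inv_of_mem_cycleFactorsFinset
    (cycleOf_mem_cycleFactorsFinset_iff.2 (mem_support.2 hx))
  have hτ : τ = c * (τ * c⁻¹) := by rw [← hdc.commute.eq, inv_mul_cancel_right]
  have hsplit : Disjoint (swap x (c x) * c) (τ * c⁻¹) :=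
    hdc.symm.mono (fun _ hy => (mem_support_swap_mul_imp_mem_support_ne hy).1) le_rfl
  have h1 := hdc.symm.numCycles_mul
  have h2 := hsplit.numCycles_mul
  have h3 := hc.numCycles_swap_mul (hcx ▸ hx)
  rw [← hτ] at h1
  rw [mul_assoc, ← hτ, hcx] at h2
  rw [hcx] at h3
  omega

theorem numCycles_extendDomain {β : Type*} [Fintype β] [DecidableEq β] {p : β → Prop}
    [DecidablePred p] (e : Perm α) (f : α ≃ Subtype p) :
    (e.extendDomain f).numCycles = e.numCycles + Fintype.card {b // ¬p b} := by
  have he := e.numCycles_add_card_support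
  have hext := (e.extendDomain f).numCycles_add_card_support
  rw [cycleType_extendDomain, ← sum_cycleType, cycleType_extendDomain, sum_cycleType] at hext
  have hcard : Fintype.card β = Fintype.card α + Fintype.card {b // ¬p b} := by
    rw [Fintype.card_congr f, Fintype.card_subtype_compl,
      Nat.add_sub_cancel' (Fintype.card_subtype_le p)]
  have := e.support.card_le_univ
  omega

end Equiv.Perm

section Records

variable {n : ℕ} {β : Type*}

def IsLRMax [LT β] (f : Fin n → β) (i : Fin n) : Prop :=
  ∀ j, j < i → f j < f i

def IsRLMin [LT β] (f : Fin n → β) (i : Fin n) : Prop :=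
  ∀ j, i < j → f i < f j

theorem lrMaxCount_eq_card_isLRMax (α : Equiv.Perm (Fin n)) :
    lrMaxCount α = Nat.card {i // IsLRMax α i} :=
  rfl

theorem rlMinCount_eq_card_isRLMin (α : Equiv.Perm (Fin n)) :
    rlMinCount α = Nat.card {i // IsRLMin α i} :=
  rfl

theorem isLRMax_eq_of_forall_lt_max [Preorder β] {f g : Fin n → β} {i : Fin n}
    (hf : ∀ j ≠ i, f j < f i) (hg : ∀ j ≠ i, g j < g i)
    (h : ∀ m < i, IsLRMax f m ↔ IsLRMax g m) : IsLRMax f = IsLRMax g := by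
  have beyond : ∀ {f : Fin n → β}, (∀ j ≠ i, f j < f i) → ∀ m, i ≤ m →
      (IsLRMax f m ↔ m = i) := by
    intro f hf m hm
    refine ⟨fun hlr => by_contra fun hne => ?_, fun hmi j hj => hmi ▸ hf j (hmi ▸ hj).ne⟩
    exact lt_asymm (hlr i (lt_of_le_of_ne hm (Ne.symm hne))) (hf m hne)
  funext m
  apply propext
  rcases lt_or_ge m i with hm | hm
  · exact h m hm
  · rw [beyond hf m hm, beyond hg m hm]

theorem isLRMax_castSucc_iff {m : ℕ} {σ : Fin (n + 1) → Fin (m + 1)} {e : Fin n → Fin m}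
    {k : Fin n} (h : ∀ j ≤ k, σ j.castSucc = (e j).castSucc) :
    IsLRMax σ k.castSucc ↔ IsLRMax e k := by
  constructor
  · intro hσ j hj
    have := hσ j.castSucc (Fin.castSucc_lt_castSucc_iff.2 hj)
    rwa [h j hj.le, h k le_rfl, Fin.castSucc_lt_castSucc_iff] at this
  · intro he j hj
    obtain ⟨j, rfl⟩ := Fin.exists_castSucc_eq.2 (hj.trans (Fin.castSucc_lt_last k)).ne
    rw [Fin.castSucc_lt_castSucc_iff] at hj
    rw [h j hj.le, h k le_rfl, Fin.castSucc_lt_castSucc_iff]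
    exact he j hj

end Records

namespace Equiv.Perm

variable {n : ℕ}

theorem cycleCount_eq_numCycles (α : Perm (Fin n)) : cycleCount α = α.numCycles :=
  rfl

theorem extendDomain_finSuccAboveEquiv_last_castSucc (e : Perm (Fin n)) (k : Fin n) :
    e.extendDomain (finSuccAboveEquiv (Fin.last n)) k.castSucc = (e k).castSucc := by
  rw [← Fin.succAbove_last_apply, ← Fin.succAbove_last_apply]
  exact e.extendDomain_apply_image (finSuccAboveEquiv (Fin.last n)) k

theorem extendDomain_finSuccAboveEquiv_last_last (e : Perm (Fin n)) :
    e.extendDomain (finSuccAboveEquiv (Fin.last n)) (Fin.last n) = Fin.last n :=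
  e.extendDomain_apply_not_subtype _ (not_not.2 rfl)

noncomputable def removeLast (α : Perm (Fin (n + 1))) : Perm (Fin n) :=
  removeNone (finSuccEquivLast.permCongr α)

theorem extendDomain_removeLast (α : Perm (Fin (n + 1))) :
    α.removeLast.extendDomain (finSuccAboveEquiv (Fin.last n)) =
      swap (Fin.last n) (α (Fin.last n)) * α := by
  have h := congrArg (⇑) (map_equiv_removeNone (finSuccEquivLast.permCongr α))
  refine Equiv.ext fun x => ?_
  induction x using Fin.lastCases with
  | last => rw [extendDomain_finSuccAboveEquiv_last_last, mul_apply, swap_apply_right]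
  | cast k =>
    apply finSuccEquivLast.injective
    rw [extendDomain_finSuccAboveEquiv_last_castSucc, finSuccEquivLast_castSucc, mul_apply,
      finSuccEquivLast.injective.map_swap, finSuccEquivLast_last]
    simpa only [removeLast, optionCongr_apply, Option.map_some, mul_apply, permCongr_apply,
      symm_apply_apply, finSuccEquivLast_symm_none, finSuccEquivLast_symm_some] using
      congrFun h (some k)

theorem eq_swap_mul_extendDomain_removeLast (α : Perm (Fin (n + 1))) :
    α = swap (Fin.last n) (α.removeLast.extendDomain (finSuccAboveEquiv (Fin.last n))
      (α⁻¹ (Fin.last n))) * α.removeLast.extendDomain (finSuccAboveEquiv (Fin.last n)) := by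
  rw [extendDomain_removeLast, mul_apply, coe_inv, apply_symm_apply, swap_apply_left,
    swap_mul_self_mul]

theorem apply_castSucc_eq_removeLast {α : Perm (Fin (n + 1))} {k : Fin n}
    (hk : k.castSucc ≠ α⁻¹ (Fin.last n)) : α k.castSucc = (α.removeLast k).castSucc := by
  rw [← extendDomain_finSuccAboveEquiv_last_castSucc, extendDomain_removeLast, mul_apply,
    swap_apply_of_ne_of_ne]
  · exact fun h => hk (eq_inv_iff_eq.2 h)
  · exact α.injective.ne (Fin.castSucc_lt_last k).ne

theorem numCycles_eq_numCycles_removeLast (α : Perm (Fin (n + 1))) :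
    α.numCycles = α.removeLast.numCycles + if α (Fin.last n) = Fin.last n then 1 else 0 := by
  have h := numCycles_extendDomain α.removeLast (finSuccAboveEquiv (Fin.last n))
  have hlast : Fintype.card {b : Fin (n + 1) // ¬b ≠ Fin.last n} = 1 := by simp
  rw [extendDomain_removeLast, hlast] at h
  split_ifs with hfix
  · rwa [hfix, swap_self, ← one_def, one_mul] at h
  · rw [numCycles_swap_mul hfix] at h
    omega

def insertMax (e : Perm (Fin n)) (i : Fin (n + 1)) : Perm (Fin (n + 1)) :=
  (finSuccEquiv' i).trans (e.optionCongr.trans finSuccEquivLast.symm)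

@[simp]
theorem insertMax_apply_self (e : Perm (Fin n)) (i : Fin (n + 1)) :
    insertMax e i i = Fin.last n := by
  simp [insertMax]

@[simp]
theorem insertMax_apply_succAbove (e : Perm (Fin n)) (i : Fin (n + 1)) (k : Fin n) :
    insertMax e i (i.succAbove k) = (e k).castSucc := by
  simp [insertMax]

theorem insertMax_injective2 :
    Function.Injective2 (insertMax : Perm (Fin n) → Fin (n + 1) → Perm (Fin (n + 1))) := by
  intro e e' i i' h
  have hi : i = i' := by
    have := insertMax_apply_self e' i'
    rw [← h, (insertMax e i).injective.eq_iff' (insertMax_apply_self e i)] at this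
    exact this.symm
  subst hi
  refine ⟨Equiv.ext fun k => Fin.castSucc_injective n ?_, rfl⟩
  rw [← insertMax_apply_succAbove, h, insertMax_apply_succAbove]

theorem isRLMin_insertMax_succAbove (e : Perm (Fin n)) (i : Fin (n + 1)) (k : Fin n) :
    IsRLMin (insertMax e i) (i.succAbove k) ↔ IsRLMin e k := by
  constructor
  · intro h j hj
    simpa using h (i.succAbove j) (Fin.succAbove_lt_succAbove_iff.2 hj)
  · intro h j hj
    rcases Fin.eq_self_or_eq_succAbove i j with rfl | ⟨j, rfl⟩
    · simp
    · simpa using h j (Fin.succAbove_lt_succAbove_iff.1 hj)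

theorem isRLMin_insertMax_self (e : Perm (Fin n)) (i : Fin (n + 1)) :
    IsRLMin (insertMax e i) i ↔ i = Fin.last n := by
  refine ⟨fun h => by_contra fun hne => ?_, fun hi j hj => ?_⟩
  · have := h (Fin.last n) (lt_of_le_of_ne (Fin.le_last i) hne)
    rw [insertMax_apply_self] at this
    exact (Fin.le_last _).not_gt this
  · exact absurd hj (hi ▸ (Fin.le_last j).not_gt)

theorem rlMinCount_insertMax (e : Perm (Fin n)) (i : Fin (n + 1)) :
    rlMinCount (insertMax e i) = rlMinCount e + if i = Fin.last n then 1 else 0 := by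
  classical
  simp only [rlMinCount_eq_card_isRLMin, Nat.card_eq_fintype_card, Fintype.card_subtype,
    Finset.card_filter, Fin.sum_univ_succAbove _ i, isRLMin_insertMax_self,
    isRLMin_insertMax_succAbove]
  omega

noncomputable def cyclesToRLMins : {n : ℕ} → Perm (Fin n) → Perm (Fin n)
  | 0, α => α
  | n + 1, α => insertMax (cyclesToRLMins α.removeLast) (α⁻¹ (Fin.last n))

theorem isLRMax_cyclesToRLMins : ∀ {n : ℕ} (α : Perm (Fin n)),
    IsLRMax (cyclesToRLMins α) = IsLRMax α
  | 0, _ => rfl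
  | n + 1, α => by
    rw [cyclesToRLMins]
    set i := α⁻¹ (Fin.last n)
    have hmax : ∀ σ : Perm (Fin (n + 1)), σ i = Fin.last n → ∀ j ≠ i, σ j < σ i :=
      fun σ hσ j hj => hσ ▸ Fin.lt_last_iff_ne_last.2 (σ.injective.ne hj |>.trans_eq hσ)
    refine isLRMax_eq_of_forall_lt_max (hmax _ (insertMax_apply_self _ i))
      (hmax α (by simp [i])) fun m hm => ?_
    obtain ⟨k, rfl⟩ := Fin.exists_castSucc_eq.2 (hm.trans_le (Fin.le_last i)).ne
    have hbefore : ∀ j ≤ k, j.castSucc < i :=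
      fun j hj => (Fin.castSucc_le_castSucc_iff.2 hj).trans_lt hm
    rw [isLRMax_castSucc_iff (e := cyclesToRLMins α.removeLast), isLRMax_cyclesToRLMins,
      isLRMax_castSucc_iff (σ := α)]
    · exact fun j hj => apply_castSucc_eq_removeLast (hbefore j hj).ne
    · intro j hj
      rw [← Fin.succAbove_of_castSucc_lt i j (hbefore j hj), insertMax_apply_succAbove]

theorem lrMaxCount_cyclesToRLMins (α : Perm (Fin n)) :
    lrMaxCount (cyclesToRLMins α) = lrMaxCount α := by
  rw [lrMaxCount_eq_card_isLRMax, lrMaxCount_eq_card_isLRMax, isLRMax_cyclesToRLMins]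

theorem rlMinCount_cyclesToRLMins : ∀ {n : ℕ} (α : Perm (Fin n)),
    rlMinCount (cyclesToRLMins α) = cycleCount α
  | 0, α => by simp [Subsingleton.elim α 1, rlMinCount, cycleCount]
  | n + 1, α => by
    rw [cyclesToRLMins, rlMinCount_insertMax, rlMinCount_cyclesToRLMins, cycleCount_eq_numCycles,
      cycleCount_eq_numCycles, numCycles_eq_numCycles_removeLast]
    simp_rw [inv_eq_iff_eq, eq_comm (a := Fin.last n)]

theorem cyclesToRLMins_injective : ∀ {n : ℕ}, Function.Injective (cyclesToRLMins (n := n))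
  | 0 => fun α β _ => Subsingleton.elim α β
  | n + 1 => fun α β h => by
    obtain ⟨he, hi⟩ := insertMax_injective2 h
    rw [eq_swap_mul_extendDomain_removeLast α, eq_swap_mul_extendDomain_removeLast β,
      cyclesToRLMins_injective he, hi]

end Equiv.Perm

theorem lrmax_cycles_eq_lrmax_rlmin_general (n p q : ℕ) :
    Nat.card {α : Equiv.Perm (Fin n) // lrMaxCount α = p ∧ cycleCount α = q} =
      Nat.card {α : Equiv.Perm (Fin n) // lrMaxCount α = p ∧ rlMinCount α = q} := by
  have hbij := Finite.injective_iff_bijective.1 (Perm.cyclesToRLMins_injective (n := n))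
  refine Nat.card_congr <| (Equiv.ofBijective _ hbij).subtypeEquiv fun α => ?_
  rw [Equiv.ofBijective_apply, Perm.lrMaxCount_cyclesToRLMins, Perm.rlMinCount_cyclesToRLMins]

theorem lrmax_cycles_eq_lrmax_rlmin (n p q : ℕ) (hn : 1 ≤ n) (hp : 1 ≤ p) (hq : 1 ≤ q) :
    Nat.card {α : Equiv.Perm (Fin n) // lrMaxCount α = p ∧ cycleCount α = q} =
      Nat.card {α : Equiv.Perm (Fin n) // lrMaxCount α = p ∧ rlMinCount α = q} :=
  lrmax_cycles_eq_lrmax_rlmin_general n p q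
end

section
/- For every n > 1, the polynomials L_n and L'_n satisfy L'_n(x,y) = y · L_{n−1}(x, y+1) and L_n(x,y) = L'_n(x,y) + Σ_{p=1}^{n−1} L'_p(x,y) · L_{n−p}(x,y). -/
/-- A Dyck path, encoded as a list of booleans (`true` = letter `a` (up step),
`false` = letter `b` (down step)): equally many `a`'s and `b`'s, and every
prefix has at least as many `a`'s as `b`'s. -/
def IsDyck (w : List Bool) : Prop :=
  w.count true = w.count false ∧
    ∀ k ≤ w.length, (w.take k).count false ≤ (w.take k).count true

/-- A primitive Dyck path: one which is not the concatenation of two nonempty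
Dyck paths. -/
def IsPrimitiveDyck (w : List Bool) : Prop :=
  IsDyck w ∧ ¬ ∃ u v : List Bool, u ≠ [] ∧ v ≠ [] ∧ IsDyck u ∧ IsDyck v ∧ w = u ++ v

/-- The polynomial `L(w)` in the variables `x = X true` and `y = X false`:
the product over all occurrences of `b` in `w` of `x` if the occurrence is
immediately preceded by an `a`, and of `y + h` otherwise, where `h` is the
number of `a`'s minus the number of `b`'s in the prefix ending at that
occurrence. -/
noncomputable def Lpoly (w : List Bool) : MvPolynomial Bool ℤ :=
  ∏ i ∈ Finset.range w.length,
    if w.getD i true = false then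
      (if 1 ≤ i ∧ w.getD (i - 1) false = true then MvPolynomial.X true
       else MvPolynomial.X false +
         MvPolynomial.C (((w.take (i + 1)).count true : ℤ) -
           ((w.take (i + 1)).count false : ℤ)))
    else 1

open scoped Classical in
/-- `LSum n` is the sum of `L(w)` over all Dyck paths `w` of length `2n`. -/
noncomputable def LSum (n : ℕ) : MvPolynomial Bool ℤ :=
  ∑ f : Fin (2 * n) → Bool,
    if IsDyck (List.ofFn f) then Lpoly (List.ofFn f) else 0

open scoped Classical in
/-- `LSum' n` is the sum of `L(w)` over all primitive Dyck paths `w` of length `2n`. -/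
noncomputable def LSum' (n : ℕ) : MvPolynomial Bool ℤ :=
  ∑ f : Fin (2 * n) → Bool,
    if IsPrimitiveDyck (List.ofFn f) then Lpoly (List.ofFn f) else 0

/-!
A nonempty Dyck word factors uniquely as `a u b v` with `u`, `v` Dyck words (the first return
to the axis, Mathlib's `DyckWord.insidePart` and `DyckWord.outsidePart`), and it is primitive
exactly when `v` is empty. The weight `L` is multiplicative over such concatenations, because a
nonempty Dyck word ends with a `b` at height `0`. Wrapping a nonempty `u` as `a u b` raises every
height inside by one, which is the substitution `y ↦ y + 1`, and the closing `b`, at height `0`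
after a `b`, contributes `y`.
-/

open MvPolynomial

namespace List

def height (w : List Bool) : ℤ := w.count true - w.count false

@[simp] lemma height_append (u v : List Bool) : height (u ++ v) = height u + height v := by
  simp only [height, count_append]; push_cast; ring

@[simp] lemma height_cons (c : Bool) (w : List Bool) :
    height (c :: w) = (if c then 1 else -1) + height w := by
  rw [← singleton_append, height_append]; cases c <;> rfl

end List

open List

noncomputable def stepFactor (w : List Bool) (c : Bool) : MvPolynomial Bool ℤ :=
  if c then 1 else if w.getLast? = some true then X true else X false + C (w.height - 1)

@[simp] lemma Lpoly_nil : Lpoly [] = 1 := rfl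

lemma Lpoly_concat (w : List Bool) (c : Bool) :
    Lpoly (w ++ [c]) = Lpoly w * stepFactor w c := by
  rw [Lpoly, length_append, length_singleton, Finset.prod_range_succ, Lpoly]
  congr 1
  · refine Finset.prod_congr rfl fun i hi => ?_
    rw [Finset.mem_range] at hi
    rw [getD_append _ _ _ _ hi, getD_append _ _ _ _ (by omega),
      take_append_of_le_length (by omega)]
  · have hlast : (1 ≤ w.length ∧ (w ++ [c]).getD (w.length - 1) false = true) ↔
        w.getLast? = some true := by
      rcases eq_nil_or_concat' w with rfl | ⟨v, d, rfl⟩ <;> simp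
    rw [getD_append_right _ _ _ _ le_rfl, Nat.sub_self, getD_cons_zero, if_congr hlast rfl rfl,
      take_of_length_le (by simp), stepFactor]
    cases c
    · have hheight : ((w ++ [false]).count true : ℤ) - (w ++ [false]).count false =
          w.height - 1 := height_append w [false]
      rw [hheight]; simp
    · simp

lemma stepFactor_append {u : List Bool} (hu : u.height = 0) (hlast : u.getLast? ≠ some true)
    (v : List Bool) (c : Bool) : stepFactor (u ++ v) c = stepFactor v c := by
  have hlast' : (u ++ v).getLast? = some true ↔ v.getLast? = some true := by
    rw [getLast?_append]
    cases v.getLast? <;> simp [hlast]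
  simp only [stepFactor, if_congr hlast' rfl rfl, height_append, hu, zero_add]

theorem Lpoly_append {u : List Bool} (hu : u.height = 0) (hlast : u.getLast? ≠ some true)
    (v : List Bool) : Lpoly (u ++ v) = Lpoly u * Lpoly v := by
  induction v using reverseRecOn with
  | nil => simp
  | append_singleton v c ih =>
    rw [← append_assoc, Lpoly_concat, Lpoly_concat, ih, stepFactor_append hu hlast, mul_assoc]

noncomputable def shiftY : MvPolynomial Bool ℤ →ₐ[ℤ] MvPolynomial Bool ℤ :=
  aeval fun i => if i then X true else X false + 1

lemma stepFactor_cons_true {v : List Bool} {c : Bool} (h : v ≠ [] ∨ c = true) :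
    stepFactor (true :: v) c = shiftY (stepFactor v c) := by
  cases c
  · have hv : v ≠ [] := by simpa using h
    have hlast : (true :: v).getLast? = v.getLast? := by
      rw [getLast?_cons, getLast?_eq_some_getLast hv, Option.getD_some]
    simp only [stepFactor, hlast, height_cons]
    split_ifs <;> simp [shiftY]
  · simp [stepFactor]

-- A leading `a` raises all later heights by one; it changes the predecessor of the first
-- letter of `v` only, which must therefore not be a `b`.
theorem Lpoly_cons_true {v : List Bool} (hv : v.head? ≠ some false) :
    Lpoly (true :: v) = shiftY (Lpoly v) := by
  induction v using reverseRecOn with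
  | nil => simpa [stepFactor] using Lpoly_concat [] true
  | append_singleton v c ih =>
    have hv' : v.head? ≠ some false := by
      intro h; simp [head?_append, h] at hv
    have hvc : v ≠ [] ∨ c = true := by
      rcases eq_or_ne v [] with rfl | h
      · simpa using hv
      · exact .inl h
    rw [← cons_append, Lpoly_concat, Lpoly_concat, ih hv', stepFactor_cons_true hvc, map_mul]

theorem Lpoly_cons_true_concat_false {u : List Bool} (hu : u.height = 0)
    (hhead : u.head? ≠ some false) (hlast : u.getLast? = some false) :
    Lpoly (true :: u ++ [false]) = X false * shiftY (Lpoly u) := by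
  have hlast' : (true :: u).getLast? = some false := by
    rw [getLast?_cons, hlast, Option.getD_some]
  rw [Lpoly_concat, Lpoly_cons_true hhead, mul_comm]
  simp [stepFactor, hlast', hu]

open DyckStep

lemma IsDyck.count_take_false_le {w : List Bool} (hw : IsDyck w) (k : ℕ) :
    (w.take k).count false ≤ (w.take k).count true := by
  rcases le_or_gt k w.length with hk | hk
  · exact hw.2 k hk
  · rw [take_of_length_le hk.le]; exact hw.1.ge

def DyckStep.equivBool : DyckStep ≃ Bool where
  toFun
    | U => true
    | D => false
  invFun b := if b then U else D
  left_inv s := by cases s <;> rfl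
  right_inv b := by cases b <;> rfl

@[simp] lemma DyckStep.equivBool_U : DyckStep.equivBool U = true := rfl

@[simp] lemma DyckStep.equivBool_D : DyckStep.equivBool D = false := rfl

lemma DyckStep.equivBool_symm_true : DyckStep.equivBool.symm true = U := rfl

lemma DyckStep.equivBool_symm_false : DyckStep.equivBool.symm false = D := rfl

namespace DyckWord

def toBools (p : DyckWord) : List Bool := p.toList.map DyckStep.equivBool

lemma toBools_injective : Function.Injective toBools :=
  fun _ _ h => DyckWord.ext (map_injective_iff.mpr DyckStep.equivBool.injective h)

@[simp] lemma toBools_zero : toBools 0 = [] := rfl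

@[simp] lemma toBools_add (p q : DyckWord) : (p + q).toBools = p.toBools ++ q.toBools :=
  map_append

@[simp] lemma toBools_nest (p : DyckWord) : p.nest.toBools = true :: p.toBools ++ [false] := by
  simp [toBools, nest]

@[simp] lemma toBools_eq_nil {p : DyckWord} : p.toBools = [] ↔ p = 0 := by
  rw [toBools, map_eq_nil_iff, toList_eq_nil]

lemma length_toBools (p : DyckWord) : p.toBools.length = 2 * p.semilength := by
  rw [toBools, length_map, two_mul_semilength_eq_length]

lemma count_true_toBools (p : DyckWord) : p.toBools.count true = p.semilength :=
  count_map_of_injective _ _ DyckStep.equivBool.injective U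

lemma count_false_toBools (p : DyckWord) : p.toBools.count false = p.semilength :=
  (count_map_of_injective _ _ DyckStep.equivBool.injective D).trans p.semilength_eq_count_D.symm

lemma height_toBools (p : DyckWord) : p.toBools.height = 0 := by
  rw [height, count_true_toBools, count_false_toBools, sub_self]

lemma head?_toBools_ne (p : DyckWord) : p.toBools.head? ≠ some false := by
  rcases eq_or_ne p 0 with rfl | hp
  · simp
  · rw [head?_eq_some_head (toBools_eq_nil.not.mpr hp)]
    simp [toBools, head_map, head_eq_U]

lemma getLast?_toBools (p : DyckWord) (hp : p ≠ 0) : p.toBools.getLast? = some false := by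
  rw [getLast?_eq_some_getLast (toBools_eq_nil.not.mpr hp)]
  simp [toBools, getLast_map, getLast_eq_D]

lemma getLast?_toBools_ne (p : DyckWord) : p.toBools.getLast? ≠ some true := by
  rcases eq_or_ne p 0 with rfl | hp
  · simp
  · simp [getLast?_toBools p hp]

lemma isDyck_toBools (p : DyckWord) : IsDyck p.toBools := by
  have hcount (l : List DyckStep) (s : DyckStep) :=
    count_map_of_injective l _ DyckStep.equivBool.injective s
  refine ⟨by rw [count_true_toBools, count_false_toBools], fun k _ => ?_⟩
  rw [toBools, ← map_take, ← equivBool_U, ← equivBool_D, hcount, hcount]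
  exact p.count_D_le_count_U k

lemma exists_toBools_eq {w : List Bool} (hw : IsDyck w) : ∃ p : DyckWord, p.toBools = w := by
  have hcount (l : List Bool) (b : Bool) :=
    count_map_of_injective l _ DyckStep.equivBool.symm.injective b
  refine ⟨⟨w.map DyckStep.equivBool.symm, ?_, fun k => ?_⟩, ?_⟩
  · rw [← equivBool_symm_true, ← equivBool_symm_false, hcount, hcount, hw.1]
  · rw [← map_take, ← equivBool_symm_true, ← equivBool_symm_false, hcount, hcount]
    exact hw.count_take_false_le k
  · simp [toBools]

lemma isDyck_iff_exists_toBools_eq {w : List Bool} : IsDyck w ↔ ∃ p : DyckWord, p.toBools = w :=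
  ⟨exists_toBools_eq, fun ⟨p, hp⟩ => hp ▸ p.isDyck_toBools⟩

-- The empty word is vacuously primitive.
theorem isPrimitiveDyck_iff {w : List Bool} (hw : w ≠ []) :
    IsPrimitiveDyck w ↔ ∃ q : DyckWord, q.nest.toBools = w := by
  constructor
  · rintro ⟨hdyck, hprim⟩
    obtain ⟨p, rfl⟩ := exists_toBools_eq hdyck
    have hp : p ≠ 0 := by simpa using hw
    have hout : p.outsidePart = 0 := by
      by_contra hout
      refine hprim ⟨p.insidePart.nest.toBools, p.outsidePart.toBools, by simp, by simpa using hout,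
        isDyck_toBools _, isDyck_toBools _, ?_⟩
      rw [← toBools_add, nest_insidePart_add_outsidePart hp]
    refine ⟨p.insidePart, ?_⟩
    rw [← add_zero p.insidePart.nest, ← hout, nest_insidePart_add_outsidePart hp]
  · rintro ⟨q, rfl⟩
    refine ⟨isDyck_toBools _, ?_⟩
    rintro ⟨u, v, hu, hv, hdu, hdv, huv⟩
    obtain ⟨a, rfl⟩ := exists_toBools_eq hdu
    obtain ⟨b, rfl⟩ := exists_toBools_eq hdv
    have hab : q.nest = a + b := toBools_injective (by rw [toBools_add, huv])
    have ha : a ≠ 0 := by simpa using hu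
    have hout := congrArg outsidePart hab
    rw [outsidePart_nest, outsidePart_add ha, eq_comm, add_eq_zero'] at hout
    exact hv (by simp [hout.2])

def withSemilength (n : ℕ) : Finset DyckWord :=
  Finset.univ.map (Function.Embedding.subtype fun p => p.semilength = n)

@[simp] lemma mem_withSemilength {n : ℕ} {p : DyckWord} :
    p ∈ withSemilength n ↔ p.semilength = n := by
  simp [withSemilength]

theorem sum_withSemilength_succ {M : Type*} [AddCommMonoid M] (f : DyckWord → M) (n : ℕ) :
    ∑ p ∈ withSemilength (n + 1), f p = ∑ k ∈ Finset.range (n + 1),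
      ∑ q ∈ withSemilength k, ∑ r ∈ withSemilength (n - k), f (q.nest + r) := by
  have hne : ∀ p ∈ withSemilength (n + 1), p ≠ 0 := by
    rintro p hp rfl
    simp at hp
  simp_rw [← Finset.sum_product', Finset.sum_sigma']
  refine Finset.sum_nbij' (fun p => ⟨p.insidePart.semilength, p.insidePart, p.outsidePart⟩)
    (fun x => x.2.1.nest + x.2.2) (fun p hp => ?_) (fun x hx => ?_)
    (fun p hp => nest_insidePart_add_outsidePart (hne p hp)) (fun x hx => ?_)
    (fun p hp => by rw [nest_insidePart_add_outsidePart (hne p hp)])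
  · have hsum := semilength_insidePart_add_semilength_outsidePart_add_one (hne p hp)
    simp only [mem_withSemilength] at hp
    simp only [Finset.mem_sigma, Finset.mem_range, Finset.mem_product, mem_withSemilength]
    exact ⟨by omega, trivial, by omega⟩
  · obtain ⟨k, q, r⟩ := x
    simp only [Finset.mem_sigma, Finset.mem_range, Finset.mem_product, mem_withSemilength] at hx ⊢
    simp only [semilength_add, semilength_nest]
    omega
  · obtain ⟨k, q, r⟩ := x
    simp only [Finset.mem_sigma, Finset.mem_product, mem_withSemilength] at hx
    simp [insidePart_add nest_ne_zero, outsidePart_add nest_ne_zero, hx.2.1]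

lemma Lpoly_toBools_add (p q : DyckWord) :
    Lpoly (p + q).toBools = Lpoly p.toBools * Lpoly q.toBools := by
  rw [toBools_add, Lpoly_append p.height_toBools p.getLast?_toBools_ne]

lemma Lpoly_toBools_nest {p : DyckWord} (hp : p ≠ 0) :
    Lpoly p.nest.toBools = X false * shiftY (Lpoly p.toBools) := by
  rw [toBools_nest, Lpoly_cons_true_concat_false p.height_toBools p.head?_toBools_ne
    (p.getLast?_toBools hp)]

end DyckWord

open DyckWord

theorem sum_ofFn_ite_eq_sum {M ι : Type*} [AddCommMonoid M] {m : ℕ} (P : List Bool → Prop)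
    [DecidablePred P] (s : Finset ι) (φ : ι → List Bool) (hφ : Set.InjOn φ s)
    (hP : ∀ w, w.length = m ∧ P w ↔ ∃ i ∈ s, φ i = w) (g : List Bool → M) :
    ∑ f : Fin m → Bool, (if P (ofFn f) then g (ofFn f) else 0) = ∑ i ∈ s, g (φ i) := by
  rw [← Finset.sum_filter, ← Finset.sum_image fun _ _ _ _ h => ofFn_injective h,
    ← Finset.sum_image hφ]
  congr 1
  ext w
  simp only [Finset.mem_image, Finset.mem_filter, Finset.mem_univ, true_and]
  rw [← hP]
  constructor
  · rintro ⟨f, hf, rfl⟩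
    exact ⟨length_ofFn, hf⟩
  · rintro ⟨rfl, hw⟩
    exact ⟨w.get, by rwa [ofFn_get], ofFn_get w⟩

open scoped Classical in
theorem LSum_eq_sum (n : ℕ) : LSum n = ∑ p ∈ withSemilength n, Lpoly p.toBools := by
  refine sum_ofFn_ite_eq_sum IsDyck _ _ toBools_injective.injOn (fun w => ?_) _
  simp only [isDyck_iff_exists_toBools_eq, mem_withSemilength]
  constructor
  · rintro ⟨hlen, p, rfl⟩
    exact ⟨p, by rw [length_toBools] at hlen; omega, rfl⟩
  · rintro ⟨p, rfl, rfl⟩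
    exact ⟨length_toBools p, p, rfl⟩

open scoped Classical in
theorem LSum'_succ_eq_sum (n : ℕ) :
    LSum' (n + 1) = ∑ q ∈ withSemilength n, Lpoly q.nest.toBools := by
  refine sum_ofFn_ite_eq_sum IsPrimitiveDyck _ (toBools ∘ nest) ?_ (fun w => ?_) _
  · exact (toBools_injective.comp fun p q h => by simpa using congrArg insidePart h).injOn
  simp only [mem_withSemilength, Function.comp_apply]
  constructor
  · rintro ⟨hlen, hw⟩
    obtain ⟨q, rfl⟩ := (isPrimitiveDyck_iff (by rintro rfl; simp at hlen)).mp hw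
    rw [length_toBools, semilength_nest] at hlen
    exact ⟨q, by omega, rfl⟩
  · rintro ⟨q, rfl, rfl⟩
    exact ⟨by rw [length_toBools, semilength_nest], (isPrimitiveDyck_iff (by simp)).mpr ⟨q, rfl⟩⟩

lemma LSum_zero : LSum 0 = 1 := by
  simp [LSum, IsDyck]

theorem LSum'_succ {m : ℕ} (hm : m ≠ 0) : LSum' (m + 1) = X false * shiftY (LSum m) := by
  rw [LSum'_succ_eq_sum, LSum_eq_sum, map_sum, Finset.mul_sum]
  refine Finset.sum_congr rfl fun q hq => Lpoly_toBools_nest ?_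
  rintro rfl
  exact hm (mem_withSemilength.mp hq).symm

theorem LSum_succ (m : ℕ) :
    LSum (m + 1) = ∑ k ∈ Finset.range (m + 1), LSum' (k + 1) * LSum (m - k) := by
  simp only [LSum_eq_sum, LSum'_succ_eq_sum, sum_withSemilength_succ, Finset.sum_mul_sum,
    Lpoly_toBools_add]

theorem L_recurrences (n : ℕ) (hn : 1 < n) :
    LSum' n = MvPolynomial.X false *
        (MvPolynomial.aeval (fun i : Bool =>
          if i then MvPolynomial.X true else MvPolynomial.X false + 1)
          (LSum (n - 1))) ∧
      LSum n = LSum' n + ∑ p ∈ Finset.Icc 1 (n - 1), LSum' p * LSum (n - p) := by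
  obtain ⟨m, rfl⟩ : ∃ m, n = m + 1 := ⟨n - 1, by omega⟩
  rw [Nat.add_sub_cancel]
  refine ⟨LSum'_succ (by omega), ?_⟩
  rw [LSum_succ, Finset.sum_range_succ, Nat.sub_self, LSum_zero, mul_one, add_comm,
    ← Finset.Ico_add_one_right_eq_Icc, Finset.sum_Ico_eq_sum_range, Nat.add_sub_cancel]
  refine congrArg _ (Finset.sum_congr rfl fun k _ => ?_)
  rw [add_comm 1 k, Nat.add_sub_add_right]
end

section
/- For every m > 1, the polynomials M_m and M'_m satisfy M'_m(y) = y · M_{m−1}(y+1) and M_m(y) = M'_m(y) + Σ_{p=1}^{m−1} M'_p(y) · M_{m−p}(y). -/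
/-- The polynomial `M(w)` in the variable `y = X`: the product over all
occurrences of `b` in `w` of `y + h`, where `h` is the number of `a`'s minus
the number of `b`'s in the prefix ending at that occurrence. -/
noncomputable def Mpoly (w : List Bool) : Polynomial ℤ :=
  ∏ i ∈ Finset.range w.length,
    if w.getD i true = false then
      Polynomial.X + Polynomial.C (((w.take (i + 1)).count true : ℤ) -
        ((w.take (i + 1)).count false : ℤ))
    else 1

open scoped Classical in
/-- `MSum m` is the sum of `M(w)` over all Dyck paths `w` of length `2m`. -/
noncomputable def MSum (m : ℕ) : Polynomial ℤ :=
  ∑ f : Fin (2 * m) → Bool,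
    if IsDyck (List.ofFn f) then Mpoly (List.ofFn f) else 0

open scoped Classical in
/-- `MSum' m` is the sum of `M(w)` over all primitive Dyck paths `w` of length `2m`. -/
noncomputable def MSum' (m : ℕ) : Polynomial ℤ :=
  ∑ f : Fin (2 * m) → Bool,
    if IsPrimitiveDyck (List.ofFn f) then Mpoly (List.ofFn f) else 0


/-! A nonempty Dyck path splits uniquely as `u v` with `u` primitive and nonempty (cut at the
first return to height zero), and the nonempty primitive paths are exactly the words `a w b`
with `w` a Dyck path. Prepending a word of height `h` raises every later height by `h`, so
`M(u v)(y) = M(u)(y) · M(v)(y + h)`. With `h = 0` the splitting gives the convolution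
recurrence; for `a w b` the inner path is raised by one and the final `b` contributes `y`. -/

open Polynomial Finset

def List.height_s17 (w : List Bool) : ℤ := w.count true - w.count false

@[simp]
lemma List.height_nil : ([] : List Bool).height_s17 = 0 := rfl

lemma List.height_cons_s17 (a : Bool) (w : List Bool) :
    (a :: w).height_s17 = (if a then 1 else -1) + w.height_s17 := by
  cases a <;> simp [List.height_s17] <;> ring

lemma List.height_append_s17 (u v : List Bool) : (u ++ v).height_s17 = u.height_s17 + v.height_s17 := by
  simp only [List.height_s17, List.count_append]; push_cast; ring

lemma isDyck_iff_height {w : List Bool} :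
    IsDyck w ↔ w.height_s17 = 0 ∧ ∀ k, 0 ≤ (w.take k).height_s17 := by
  simp only [IsDyck, List.height_s17, sub_eq_zero, sub_nonneg, Nat.cast_inj, Nat.cast_le]
  refine and_congr_right fun h => ⟨fun hk k => ?_, fun hk k _ => hk k⟩
  rcases le_or_gt k w.length with hkw | hkw
  · exact hk k hkw
  · rw [List.take_of_length_le hkw.le, h]

lemma isDyck_nil : IsDyck [] := by simp [IsDyck]

lemma IsDyck.length_eq_two_mul {w : List Bool} (hw : IsDyck w) :
    w.length = 2 * w.count true := by
  have := List.count_true_add_count_false w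
  rw [hw.1] at this ⊢
  omega

lemma IsDyck.append {u v : List Bool} (hu : IsDyck u) (hv : IsDyck v) : IsDyck (u ++ v) := by
  rw [isDyck_iff_height] at hu hv ⊢
  refine ⟨by rw [List.height_append_s17, hu.1, hv.1, add_zero], fun k => ?_⟩
  rw [List.take_append, List.height_append_s17]
  rcases le_or_gt k u.length with hk | hk
  · simpa [Nat.sub_eq_zero_of_le hk] using hu.2 k
  · rw [List.take_of_length_le hk.le, hu.1, zero_add]; exact hv.2 _

lemma IsDyck.right_of_append {u v : List Bool} (huv : IsDyck (u ++ v)) (hu : IsDyck u) :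
    IsDyck v := by
  rw [isDyck_iff_height, List.height_append_s17] at *
  refine ⟨by linarith [hu.1], fun k => ?_⟩
  have := huv.2 (u.length + k)
  rwa [List.take_length_add_append, List.height_append_s17, hu.1, zero_add] at this

lemma IsDyck.take_of_height_eq_zero {w : List Bool} (hw : IsDyck w) {k : ℕ}
    (hk : (w.take k).height_s17 = 0) : IsDyck (w.take k) := by
  rw [isDyck_iff_height] at hw ⊢
  refine ⟨hk, fun j => ?_⟩
  rw [List.take_take]
  exact hw.2 _

lemma isPrimitiveDyck_iff_height {w : List Bool} :
    IsPrimitiveDyck w ↔ w.height_s17 = 0 ∧ ∀ k, 0 < k → k < w.length → 0 < (w.take k).height_s17 := by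
  constructor
  · rintro ⟨hw, hsplit⟩
    refine ⟨(isDyck_iff_height.mp hw).1, fun k hk0 hkw => ?_⟩
    refine (isDyck_iff_height.mp hw).2 k |>.lt_of_ne' fun hk => hsplit ?_
    have hu := hw.take_of_height_eq_zero hk
    refine ⟨w.take k, w.drop k, List.ne_nil_of_length_pos (by simp; omega),
      List.ne_nil_of_length_pos (by simp; omega), hu, ?_, (List.take_append_drop k w).symm⟩
    exact (by rwa [List.take_append_drop] : IsDyck (w.take k ++ w.drop k)).right_of_append hu
  · rintro ⟨hw, hpos⟩
    have hdyck : IsDyck w := by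
      refine isDyck_iff_height.mpr ⟨hw, fun k => ?_⟩
      rcases Nat.eq_zero_or_pos k with rfl | hk0
      · simp
      rcases lt_or_ge k w.length with hkw | hkw
      · exact (hpos k hk0 hkw).le
      · rw [List.take_of_length_le hkw, hw]
    refine ⟨hdyck, ?_⟩
    rintro ⟨u, v, hu0, hv0, hu, -, rfl⟩
    have := hpos u.length (List.length_pos_iff.mpr hu0) (by simpa using List.length_pos_iff.mpr hv0)
    rw [List.take_left, (isDyck_iff_height.mp hu).1] at this
    exact this.false

lemma height_take_succ_cons_append (a : Bool) {v : List Bool} (l : List Bool) {j : ℕ}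
    (hj : j ≤ v.length) :
    ((a :: v ++ l).take (j + 1)).height_s17 = (if a then 1 else -1) + (v.take j).height_s17 := by
  rw [List.cons_append, List.take_succ_cons, List.take_append_of_le_length hj, List.height_cons_s17]

lemma isPrimitiveDyck_cons_append_iff {v : List Bool} :
    IsPrimitiveDyck (true :: v ++ [false]) ↔ IsDyck v := by
  have htotal : (true :: v ++ [false]).height_s17 = v.height_s17 := by
    rw [List.cons_append, List.height_cons_s17, List.height_append_s17]; simp [List.height_s17]
  rw [isPrimitiveDyck_iff_height, isDyck_iff_height, htotal]
  refine and_congr_right fun hv => ⟨fun hpos j => ?_, fun hnonneg k hk0 hk => ?_⟩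
  · rcases le_or_gt j v.length with hj | hj
    · have := hpos (j + 1) (by omega) (by simp; omega)
      rw [height_take_succ_cons_append _ _ hj, if_pos rfl] at this
      omega
    · rw [List.take_of_length_le hj.le, hv]
  · obtain ⟨j, rfl⟩ := Nat.exists_eq_add_one.mpr hk0
    rw [height_take_succ_cons_append _ _ (by simp at hk; omega), if_pos rfl]
    linarith [hnonneg j]

lemma IsPrimitiveDyck.exists_eq_cons_append {w : List Bool} (hw : IsPrimitiveDyck w)
    (hne : w ≠ []) : ∃ v, w = true :: v ++ [false] := by
  obtain ⟨hheight, hprefix⟩ := isDyck_iff_height.mp hw.1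
  obtain ⟨a, t, rfl⟩ := List.exists_cons_of_ne_nil hne
  have ht : t ≠ [] := by
    rintro rfl; cases a <;> simp [List.height_s17] at hheight
  obtain ⟨s, b, rfl⟩ := List.eq_nil_or_concat' t |>.resolve_left ht
  have ha : a = true := by
    have := hprefix 1
    cases a <;> simp_all [List.height_s17]
  have hb : b = false := by
    have := hprefix (s.length + 1)
    rw [← List.cons_append, List.height_append_s17] at hheight
    rw [List.take_succ_cons, List.take_left] at this
    cases b <;> simp_all [List.height_s17]
    omega
  exact ⟨s, by rw [ha, hb, List.cons_append]⟩

lemma IsPrimitiveDyck.eq_nil_of_append {u a : List Bool} (h : IsPrimitiveDyck (u ++ a))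
    (hu : IsDyck u) (hne : u ≠ []) : a = [] := by
  by_contra ha
  exact h.2 ⟨u, a, hne, ha, hu, h.1.right_of_append hu, rfl⟩

lemma IsPrimitiveDyck.eq_of_append_eq_append {u v u' v' : List Bool} (hu : IsPrimitiveDyck u)
    (hu' : IsPrimitiveDyck u') (hne : u ≠ []) (hne' : u' ≠ []) (h : u ++ v = u' ++ v') :
    u = u' := by
  rcases List.append_eq_append_iff.mp h with ⟨a, rfl, -⟩ | ⟨a, rfl, -⟩
  · rw [hu'.eq_nil_of_append hu.1 hne, List.append_nil]
  · rw [hu.eq_nil_of_append hu'.1 hne', List.append_nil]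

lemma IsDyck.exists_isPrimitiveDyck_append {w : List Bool} (hw : IsDyck w) (hne : w ≠ []) :
    ∃ u v, u ≠ [] ∧ IsPrimitiveDyck u ∧ IsDyck v ∧ w = u ++ v := by
  induction h : w.length using Nat.strong_induction_on generalizing w with
  | _ n ih =>
  by_cases hp : IsPrimitiveDyck w
  · exact ⟨w, [], hne, hp, isDyck_nil, (List.append_nil w).symm⟩
  obtain ⟨u, v, hu0, hv0, hu, hv, rfl⟩ :
      ∃ u v, u ≠ [] ∧ v ≠ [] ∧ IsDyck u ∧ IsDyck v ∧ w = u ++ v := by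
    simpa [IsPrimitiveDyck, hw] using hp
  obtain ⟨u₁, u₂, hu₁0, hu₁, hu₂, rfl⟩ :=
    ih u.length (by simpa [← h] using List.length_pos_iff.mpr hv0) hu hu0 rfl
  exact ⟨u₁, u₂ ++ v, hu₁0, hu₁, hu₂.append hv, List.append_assoc _ _ _⟩

lemma Mpoly_eq_prod_height (w : List Bool) :
    Mpoly w = ∏ i ∈ range w.length,
      if w.getD i true = false then X + C (w.take (i + 1)).height_s17 else 1 := rfl

@[simp]
lemma Mpoly_nil : Mpoly [] = 1 := rfl

lemma Mpoly_singleton_true : Mpoly [true] = 1 := by simp [Mpoly_eq_prod_height]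

lemma Mpoly_singleton_false : Mpoly [false] = X - 1 := by
  simp [Mpoly_eq_prod_height, List.height_s17, sub_eq_add_neg]

lemma Mpoly_append (u v : List Bool) :
    Mpoly (u ++ v) = Mpoly u * (Mpoly v).comp (X + C u.height_s17) := by
  rw [Mpoly_eq_prod_height, List.length_append, prod_range_add, Mpoly_eq_prod_height u,
    Mpoly_eq_prod_height v, Polynomial.prod_comp]
  congr 1
  · refine prod_congr rfl fun i hi => ?_
    rw [mem_range] at hi
    rw [List.getD_append _ _ _ _ hi, List.take_append_of_le_length hi]
  · refine prod_congr rfl fun i _ => ?_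
    rw [List.getD_append_right _ _ _ _ (Nat.le_add_right _ _), Nat.add_sub_cancel_left,
      add_assoc, List.take_length_add_append, List.height_append_s17]
    split_ifs <;> simp [add_assoc]

lemma Mpoly_append_of_height_eq_zero {u : List Bool} (hu : u.height_s17 = 0) (v : List Bool) :
    Mpoly (u ++ v) = Mpoly u * Mpoly v := by
  rw [Mpoly_append, hu, C_0, add_zero, comp_X]

lemma Mpoly_cons_append {v : List Bool} (hv : v.height_s17 = 0) :
    Mpoly (true :: v ++ [false]) = X * (Mpoly v).comp (X + 1) := by
  rw [List.cons_append, ← List.singleton_append, Mpoly_append, Mpoly_singleton_true, one_mul,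
    Mpoly_append_of_height_eq_zero hv, Mpoly_singleton_false, mul_comp, mul_comm]
  simp [List.height_s17]

def wordsOfLength (n : ℕ) : Finset (List Bool) :=
  univ.map ⟨List.ofFn, List.ofFn_injective (n := n)⟩

lemma mem_wordsOfLength {n : ℕ} {w : List Bool} : w ∈ wordsOfLength n ↔ w.length = n := by
  simp only [wordsOfLength, mem_map, mem_univ, true_and, Function.Embedding.coeFn_mk]
  refine ⟨by rintro ⟨f, rfl⟩; exact List.length_ofFn, ?_⟩
  rintro rfl
  exact ⟨fun i => w[i], List.ofFn_getElem⟩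

open scoped Classical in
noncomputable def dyckPaths (n : ℕ) : Finset (List Bool) := (wordsOfLength n).filter IsDyck

open scoped Classical in
noncomputable def primitiveDyckPaths (n : ℕ) : Finset (List Bool) :=
  (wordsOfLength n).filter IsPrimitiveDyck

@[simp]
lemma mem_dyckPaths {n : ℕ} {w : List Bool} : w ∈ dyckPaths n ↔ w.length = n ∧ IsDyck w := by
  simp [dyckPaths, mem_wordsOfLength]

@[simp]
lemma mem_primitiveDyckPaths {n : ℕ} {w : List Bool} :
    w ∈ primitiveDyckPaths n ↔ w.length = n ∧ IsPrimitiveDyck w := by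
  simp [primitiveDyckPaths, mem_wordsOfLength]

lemma MSum_eq_sum_dyckPaths (m : ℕ) : MSum m = ∑ w ∈ dyckPaths (2 * m), Mpoly w := by
  rw [MSum, dyckPaths, sum_filter, wordsOfLength, sum_map]
  rfl

lemma MSum'_eq_sum_primitiveDyckPaths (m : ℕ) :
    MSum' m = ∑ w ∈ primitiveDyckPaths (2 * m), Mpoly w := by
  rw [MSum', primitiveDyckPaths, sum_filter, wordsOfLength, sum_map]
  rfl

lemma MSum_zero : MSum 0 = 1 := by
  have : dyckPaths (2 * 0) = {[]} := by
    ext w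
    simp only [mem_dyckPaths, mem_singleton, mul_zero, List.length_eq_zero_iff]
    exact ⟨And.left, by rintro rfl; exact ⟨rfl, isDyck_nil⟩⟩
  rw [MSum_eq_sum_dyckPaths, this, sum_singleton, Mpoly_nil]

lemma MSum'_succ (n : ℕ) : MSum' (n + 1) = X * (MSum n).comp (X + 1) := by
  rw [MSum'_eq_sum_primitiveDyckPaths, MSum_eq_sum_dyckPaths, Polynomial.sum_comp, mul_sum]
  symm
  refine sum_bij (fun v _ => true :: v ++ [false]) (fun v hv => ?_) (fun v _ v' _ h => ?_)
    (fun w hw => ?_) (fun v hv => ?_)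
  · rw [mem_dyckPaths] at hv
    rw [mem_primitiveDyckPaths, isPrimitiveDyck_cons_append_iff]
    exact ⟨by simp [hv.1]; ring, hv.2⟩
  · simpa using h
  · rw [mem_primitiveDyckPaths] at hw
    obtain ⟨v, rfl⟩ := hw.2.exists_eq_cons_append (List.ne_nil_of_length_pos (by omega))
    refine ⟨v, ?_, rfl⟩
    rw [isPrimitiveDyck_cons_append_iff] at hw
    exact mem_dyckPaths.mpr ⟨by simp at hw; omega, hw.2⟩
  · rw [mem_dyckPaths, isDyck_iff_height] at hv
    exact (Mpoly_cons_append hv.2.1).symm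

lemma MSum_eq_sum_Icc {m : ℕ} (hm : m ≠ 0) :
    MSum m = ∑ p ∈ Icc 1 m, MSum' p * MSum (m - p) := by
  have hsplit : ∀ p, MSum' p * MSum (m - p) =
      ∑ x ∈ primitiveDyckPaths (2 * p) ×ˢ dyckPaths (2 * (m - p)), Mpoly x.1 * Mpoly x.2 :=
    fun p => by
      rw [MSum'_eq_sum_primitiveDyckPaths, MSum_eq_sum_dyckPaths, sum_mul_sum, sum_product]
  rw [sum_congr rfl fun p _ => hsplit p, sum_sigma', MSum_eq_sum_dyckPaths]
  symm
  refine sum_bij (fun x _ => x.2.1 ++ x.2.2) ?_ ?_ ?_ ?_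
  · rintro ⟨p, u, v⟩ hx
    simp only [mem_sigma, mem_Icc, mem_product, mem_primitiveDyckPaths, mem_dyckPaths] at hx
    obtain ⟨⟨-, hpm⟩, ⟨hu_len, hu⟩, hv_len, hv⟩ := hx
    refine mem_dyckPaths.mpr ⟨?_, hu.1.append hv⟩
    rw [List.length_append, hu_len, hv_len]
    omega
  · rintro ⟨p, u, v⟩ hx ⟨p', u', v'⟩ hx' h
    simp only [mem_sigma, mem_Icc, mem_product, mem_primitiveDyckPaths, mem_dyckPaths] at hx hx'
    obtain ⟨⟨hp, -⟩, ⟨hu_len, hu⟩, -⟩ := hx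
    obtain ⟨⟨hp', -⟩, ⟨hu'_len, hu'⟩, -⟩ := hx'
    obtain rfl : u = u' := hu.eq_of_append_eq_append hu'
      (List.ne_nil_of_length_pos (by omega)) (List.ne_nil_of_length_pos (by omega)) h
    obtain rfl := List.append_cancel_left h
    obtain rfl : p = p' := by omega
    rfl
  · intro w hw
    rw [mem_dyckPaths] at hw
    obtain ⟨u, v, hu0, hu, hv, rfl⟩ :=
      hw.2.exists_isPrimitiveDyck_append (List.ne_nil_of_length_pos (by omega))
    have hu_len := hu.1.length_eq_two_mul
    have hu_pos := List.length_pos_iff.mpr hu0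
    rw [List.length_append] at hw
    refine ⟨⟨u.count true, u, v⟩, ?_, rfl⟩
    simp only [mem_sigma, mem_Icc, mem_product, mem_primitiveDyckPaths, mem_dyckPaths]
    exact ⟨⟨by omega, by omega⟩, ⟨hu_len, hu⟩, by omega, hv⟩
  · rintro ⟨p, u, v⟩ hx
    simp only [mem_sigma, mem_product, mem_primitiveDyckPaths] at hx
    obtain ⟨-, ⟨-, hu⟩, -⟩ := hx
    exact (Mpoly_append_of_height_eq_zero (isDyck_iff_height.mp hu.1).1 v).symm

theorem M_recurrences (m : ℕ) (hm : 1 < m) :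
    MSum' m = Polynomial.X * (MSum (m - 1)).comp (Polynomial.X + 1) ∧
      MSum m = MSum' m + ∑ p ∈ Finset.Icc 1 (m - 1), MSum' p * MSum (m - p) := by
  obtain ⟨n, rfl⟩ : ∃ n, m = n + 1 := ⟨m - 1, by omega⟩
  refine ⟨MSum'_succ n, ?_⟩
  rw [MSum_eq_sum_Icc n.succ_ne_zero, sum_Icc_succ_top (by omega), Nat.sub_self, MSum_zero,
    mul_one, add_comm, Nat.add_sub_cancel]
end
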